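/- arXiv:2509.20221 — 2 statements merged into one kernel-verified Lean document; each statement's English description precedes it below -/
import Mathlib

section
/- For i = 1,2, let P̃ᵢ be an almost surely discrete random probability measure on X such that for every fixed atom zᵢ of P̃ᵢ and every ε > 0 one has P(P̃ᵢ({zᵢ}) < ε) > 0, and assume Var_k(P̃ᵢ) > 0. If the kernel k is c₀-universal, then Corr_k(P̃₁,P̃₂) = 1 if and only if P̃₁ = P̃₂ almost surely. -/
open MeasureTheory ProbabilityTheory Filter
open scoped RealInnerProductSpace ENNReal NNReal

noncomputable section

/-- A positive-definite function `k`. -/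
def IsPosDef {X : Type*} (k : X → X → ℝ) : Prop :=
  ∀ (n : ℕ) (x : Fin n → X) (c : Fin n → ℝ),
    0 ≤ ∑ i : Fin n, ∑ j : Fin n, c i * c j * k (x i) (x j)

/-- A bounded, measurable, symmetric, positive-definite kernel. -/
structure IsKernel {X : Type*} [MeasurableSpace X] (k : X → X → ℝ) : Prop where
  measurable : Measurable (Function.uncurry k)
  bounded : ∃ C : ℝ, ∀ x y, |k x y| ≤ C
  symm : ∀ x y, k x y = k y x
  posDef : IsPosDef k

/-- A realization of the reproducing kernel Hilbert space of `k`: a Hilbert space together with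
a feature map reproducing `k` whose feature vectors span a dense subspace. -/
structure FeatureMap {X : Type*} [MeasurableSpace X] (k : X → X → ℝ)
    (H : Type*) [NormedAddCommGroup H] [InnerProductSpace ℝ H] : Type _ where
  toFun : X → H
  stronglyMeasurable : StronglyMeasurable toFun
  repro : ∀ x y, ⟪toFun x, toFun y⟫ = k x y
  dense_span : Dense (Submodule.span ℝ (Set.range toFun) : Set H)

/-- Kernel mean embedding of a measure, as a Bochner integral of the feature map. -/
def meanEmb {X : Type*} [MeasurableSpace X] {k : X → X → ℝ} {H : Type*}
    [NormedAddCommGroup H] [InnerProductSpace ℝ H] [CompleteSpace H]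
    (F : FeatureMap k H) (μ : Measure X) : H :=
  ∫ x, F.toFun x ∂μ

/-- Kernel covariance of two random probability measures,
`Cov_k(P₁,P₂) = E[⟪μ_k(P₁) - E[μ_k(P₁)], μ_k(P₂) - E[μ_k(P₂)]⟫]`. -/
def kerCov {X : Type*} [MeasurableSpace X] {k : X → X → ℝ} {H : Type*}
    [NormedAddCommGroup H] [InnerProductSpace ℝ H] [CompleteSpace H]
    {Ω : Type*} [MeasurableSpace Ω]
    (F : FeatureMap k H) (Pr : Measure Ω) (P₁ P₂ : Ω → Measure X) : ℝ :=
  ∫ ω, ⟪meanEmb F (P₁ ω) - ∫ ω', meanEmb F (P₁ ω') ∂Pr,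
        meanEmb F (P₂ ω) - ∫ ω', meanEmb F (P₂ ω') ∂Pr⟫ ∂Pr

/-- Kernel variance of a random probability measure. -/
def kerVar {X : Type*} [MeasurableSpace X] {k : X → X → ℝ} {H : Type*}
    [NormedAddCommGroup H] [InnerProductSpace ℝ H] [CompleteSpace H]
    {Ω : Type*} [MeasurableSpace Ω]
    (F : FeatureMap k H) (Pr : Measure Ω) (P : Ω → Measure X) : ℝ :=
  kerCov F Pr P P

/-- Kernel correlation of two random probability measures. -/
def kerCorr {X : Type*} [MeasurableSpace X] {k : X → X → ℝ} {H : Type*}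
    [NormedAddCommGroup H] [InnerProductSpace ℝ H] [CompleteSpace H]
    {Ω : Type*} [MeasurableSpace Ω]
    (F : FeatureMap k H) (Pr : Measure Ω) (P₁ P₂ : Ω → Measure X) : ℝ :=
  kerCov F Pr P₁ P₂ / (Real.sqrt (kerVar F Pr P₁) * Real.sqrt (kerVar F Pr P₂))

/-- Covariance of two real random variables. -/
def rCov {Ω : Type*} [MeasurableSpace Ω] (Pr : Measure Ω) (U V : Ω → ℝ) : ℝ :=
  ∫ ω, (U ω - ∫ ω', U ω' ∂Pr) * (V ω - ∫ ω', V ω' ∂Pr) ∂Pr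

/-- Variance of a real random variable. -/
def rVar {Ω : Type*} [MeasurableSpace Ω] (Pr : Measure Ω) (U : Ω → ℝ) : ℝ :=
  rCov Pr U U

/-- Pearson correlation of two real random variables. -/
def rCorr {Ω : Type*} [MeasurableSpace Ω] (Pr : Measure Ω) (U V : Ω → ℝ) : ℝ :=
  rCov Pr U V / (Real.sqrt (rVar Pr U) * Real.sqrt (rVar Pr V))

end

noncomputable section

/-- A kernel vanishes at infinity (is `c₀`). -/
def IsC0Kernel {Z : Type*} [TopologicalSpace Z] (k : Z → Z → ℝ) : Prop :=
  ∀ ε : ℝ, 0 < ε → ∀ y : Z, IsCompact {x : Z | ε ≤ |k x y|}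

/-- The kernel mean embedding of a bounded signed measure,
`μ_k(ξ)(y) = ∫ k(x,y) dξ(x)`, via the Jordan decomposition. -/
def signedMeanEmb {Z : Type*} [MeasurableSpace Z] (k : Z → Z → ℝ)
    (ξ : SignedMeasure Z) : Z → ℝ := fun y =>
  (∫ x, k x y ∂ξ.toJordanDecomposition.posPart)
    - ∫ x, k x y ∂ξ.toJordanDecomposition.negPart

/-- A kernel is `c₀`-universal if it is `c₀` and its kernel mean embedding is injective
on the space of bounded signed measures. -/
def IsC0Universal {Z : Type*} [TopologicalSpace Z] [MeasurableSpace Z]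
    (k : Z → Z → ℝ) : Prop :=
  IsC0Kernel k ∧ Function.Injective (signedMeanEmb k)

/-- A measure is discrete (purely atomic) if it is carried by a countable set. -/
def IsDiscreteMeasure {Z : Type*} [MeasurableSpace Z] (μ : Measure Z) : Prop :=
  ∃ S : Set Z, S.Countable ∧ μ Sᶜ = 0


/-!
Kernel correlation `1` is the equality case of Cauchy–Schwarz in `L²(Pr; H)` for the centred
mean embeddings, so `μ_k(P̃₂) = c • μ_k(P̃₁) + m` almost surely with `c > 0`. Comparing with a
fixed discrete realization `ω₀` and using injectivity of the mean embedding gives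
`P̃₂(ω) + c P̃₁(ω₀) = c P̃₁(ω) + P̃₂(ω₀)` almost surely. An atom `z` with
`P̃₂(ω₀){z} > c P̃₁(ω₀){z}` would then carry `P̃₂`-mass bounded away from `0` almost surely,
which the hypothesis on fixed atoms forbids; hence `P̃₂(ω₀) ≤ c P̃₁(ω₀)` and symmetrically
`P̃₁(ω₀) ≤ c⁻¹ P̃₂(ω₀)`. Total masses force `c = 1`, so `P̃₁(ω₀) = P̃₂(ω₀)`, and cancelling it
gives `P̃₁ = P̃₂` almost surely.
-/

namespace FeatureMap

variable {X : Type*} [MeasurableSpace X] {k : X → X → ℝ}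
  {H : Type*} [NormedAddCommGroup H] [InnerProductSpace ℝ H]

theorem exists_norm_le (hk : IsKernel k) (F : FeatureMap k H) :
    ∃ B : ℝ, ∀ x, ‖F.toFun x‖ ≤ B := by
  obtain ⟨C, hC⟩ := hk.bounded
  refine ⟨√C, fun x => Real.le_sqrt_of_sq_le ?_⟩
  calc ‖F.toFun x‖ ^ 2 = k x x := by rw [← F.repro, real_inner_self_eq_norm_sq]
    _ ≤ C := (le_abs_self _).trans (hC x x)

theorem integrable (hk : IsKernel k) (F : FeatureMap k H) (μ : Measure X) [IsFiniteMeasure μ] :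
    Integrable F.toFun μ := by
  obtain ⟨B, hB⟩ := F.exists_norm_le hk
  exact (integrable_const B).mono' F.stronglyMeasurable.aestronglyMeasurable (.of_forall hB)

variable [CompleteSpace H]

theorem inner_meanEmb (hk : IsKernel k) (F : FeatureMap k H) (μ : Measure X)
    [IsFiniteMeasure μ] (y : X) : ⟪meanEmb F μ, F.toFun y⟫ = ∫ x, k x y ∂μ := by
  rw [real_inner_comm, meanEmb, ← integral_inner (F.integrable hk μ)]
  simp only [F.repro, hk.symm]

theorem meanEmb_add (hk : IsKernel k) (F : FeatureMap k H) (μ ν : Measure X)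
    [IsFiniteMeasure μ] [IsFiniteMeasure ν] :
    meanEmb F (μ + ν) = meanEmb F μ + meanEmb F ν :=
  integral_add_measure (F.integrable hk μ) (F.integrable hk ν)

theorem meanEmb_smul (F : FeatureMap k H) (c : ℝ≥0) (μ : Measure X) :
    meanEmb F (c • μ) = (c : ℝ) • meanEmb F μ := by
  rw [meanEmb, meanEmb, integral_smul_nnreal_measure, NNReal.smul_def]

end FeatureMap

namespace IsKernel

variable {X : Type*} [MeasurableSpace X] {k : X → X → ℝ}

theorem integrable_left (hk : IsKernel k) (y : X) (μ : Measure X) [IsFiniteMeasure μ] :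
    Integrable (fun x => k x y) μ := by
  obtain ⟨C, hC⟩ := hk.bounded
  exact (integrable_const C).mono'
    (hk.measurable.comp measurable_prodMk_right).aestronglyMeasurable (.of_forall fun x => hC x y)

theorem signedMeanEmb_toSignedMeasure_sub (hk : IsKernel k) (μ ν : Measure X)
    [IsFiniteMeasure μ] [IsFiniteMeasure ν] (y : X) :
    signedMeanEmb k (μ.toSignedMeasure - ν.toSignedMeasure) y =
      ∫ x, k x y ∂μ - ∫ x, k x y ∂ν := by
  set j := (μ.toSignedMeasure - ν.toSignedMeasure).toJordanDecomposition
  have hj : j.posPart + ν = j.negPart + μ := by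
    rw [← Measure.toSignedMeasure_eq_toSignedMeasure_iff, Measure.toSignedMeasure_add,
      Measure.toSignedMeasure_add, add_comm j.negPart.toSignedMeasure,
      ← sub_eq_sub_iff_add_eq_add]
    exact SignedMeasure.toSignedMeasure_toJordanDecomposition _
  have := congrArg (fun ρ : Measure X => ∫ x, k x y ∂ρ) hj
  simp only [integral_add_measure (hk.integrable_left y _) (hk.integrable_left y _)] at this
  rw [signedMeanEmb]
  linarith

theorem measure_eq_of_integral_eq (hk : IsKernel k) (hinj : Function.Injective (signedMeanEmb k))
    {μ ν : Measure X} [IsFiniteMeasure μ] [IsFiniteMeasure ν]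
    (h : ∀ y, ∫ x, k x y ∂μ = ∫ x, k x y ∂ν) : μ = ν := by
  rw [← Measure.toSignedMeasure_eq_toSignedMeasure_iff, ← sub_eq_zero]
  refine hinj (funext fun y => ?_)
  rw [hk.signedMeanEmb_toSignedMeasure_sub, h, sub_self]
  simp [signedMeanEmb, SignedMeasure.toJordanDecomposition_zero]

end IsKernel

theorem FeatureMap.meanEmb_inj {X : Type*} [MeasurableSpace X] {k : X → X → ℝ}
    {H : Type*} [NormedAddCommGroup H] [InnerProductSpace ℝ H] [CompleteSpace H]
    (hk : IsKernel k) (hinj : Function.Injective (signedMeanEmb k)) (F : FeatureMap k H)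
    {μ ν : Measure X} [IsFiniteMeasure μ] [IsFiniteMeasure ν] :
    meanEmb F μ = meanEmb F ν ↔ μ = ν :=
  ⟨fun h => hk.measure_eq_of_integral_eq hinj fun y => by
    rw [← F.inner_meanEmb hk, ← F.inner_meanEmb hk, h], fun h => h ▸ rfl⟩

theorem Set.Countable.measure_eq_tsum_singleton {X : Type*} [MeasurableSpace X]
    [MeasurableSingletonClass X] {S : Set X} (hS : S.Countable) (μ : Measure X) :
    μ S = ∑' z : S, μ {(z : X)} := by
  conv_lhs => rw [← Set.biUnion_of_singleton S]
  exact measure_biUnion hS (fun _ _ _ _ hab => Set.disjoint_singleton.2 hab)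
    fun z _ => measurableSet_singleton z

namespace IsDiscreteMeasure

variable {X : Type*} [MeasurableSpace X] [MeasurableSingletonClass X] {μ ν : Measure X}

theorem le_of_forall_singleton_le (hμ : IsDiscreteMeasure μ) (h : ∀ z, μ {z} ≤ ν {z}) :
    μ ≤ ν := by
  obtain ⟨S, hS, hSc⟩ := hμ
  refine Measure.le_iff.2 fun s _ => ?_
  have hsS : (s ∩ S).Countable := hS.mono Set.inter_subset_right
  calc μ s = μ (s ∩ S) := (measure_inter_conull hSc).symm
    _ = ∑' z : ↥(s ∩ S), μ {(z : X)} := hsS.measure_eq_tsum_singleton μ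
    _ ≤ ∑' z : ↥(s ∩ S), ν {(z : X)} := ENNReal.tsum_le_tsum fun z => h z
    _ = ν (s ∩ S) := (hsS.measure_eq_tsum_singleton ν).symm
    _ ≤ ν s := measure_mono Set.inter_subset_left

end IsDiscreteMeasure

def FixedAtomsCanVanish {X Ω : Type*} [MeasurableSpace X] [MeasurableSpace Ω] (Pr : Measure Ω)
    (P : Ω → Measure X) : Prop :=
  ∀ z : X, 0 < Pr {ω | 0 < P ω {z}} → ∀ ε : ℝ≥0∞, 0 < ε → 0 < Pr {ω | P ω {z} < ε}

section FixedAtoms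

variable {X : Type*} [MeasurableSpace X] {Ω : Type*} [MeasurableSpace Ω] {Pr : Measure Ω}
  {P : Ω → Measure X}

theorem not_ae_le_measure_singleton [NeZero Pr]
    (hfa : FixedAtomsCanVanish Pr P)
    {z : X} {δ : ℝ≥0∞} (hδ : 0 < δ) : ¬ ∀ᵐ ω ∂Pr, δ ≤ P ω {z} := by
  intro h
  have hpos : 0 < Pr {ω | 0 < P ω {z}} := by
    refine pos_iff_ne_zero.2 fun h0 => ?_
    obtain ⟨ω, hω, hω'⟩ :=
      ((measure_eq_zero_iff_ae_notMem.1 h0).and (h.mono fun ω hω => hδ.trans_le hω)).exists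
    exact hω hω'
  have hnull : Pr {ω | P ω {z} < δ} = 0 := by simpa only [not_le] using ae_iff.1 h
  exact (hfa z hpos δ hδ).ne' hnull

theorem IsDiscreteMeasure.le_of_ae_add_eq [NeZero Pr] [MeasurableSingletonClass X]
    (hfa : FixedAtomsCanVanish Pr P)
    {Q : Ω → Measure X} {μ ν : Measure X} (hμ : IsDiscreteMeasure μ)
    (h : ∀ᵐ ω ∂Pr, P ω + ν = Q ω + μ) : μ ≤ ν := by
  refine hμ.le_of_forall_singleton_le fun z => ?_
  by_contra! hlt
  refine not_ae_le_measure_singleton hfa (z := z) (tsub_pos_of_lt hlt) ?_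
  filter_upwards [h] with ω hω
  rw [tsub_le_iff_right]
  calc μ {z} ≤ Q ω {z} + μ {z} := le_add_self
    _ = P ω {z} + ν {z} := by rw [← Measure.add_apply, ← hω, Measure.add_apply]

end FixedAtoms

theorem ae_eq_of_ae_add_smul_eq {X : Type*} [MeasurableSpace X] [MeasurableSingletonClass X]
    {Ω : Type*} [MeasurableSpace Ω] {Pr : Measure Ω} [NeZero Pr] {P₁ P₂ : Ω → Measure X}
    (hfa₁ : FixedAtomsCanVanish Pr P₁)
    (hfa₂ : FixedAtomsCanVanish Pr P₂)
    {ω₀ : Ω} [IsProbabilityMeasure (P₁ ω₀)] [IsProbabilityMeasure (P₂ ω₀)]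
    (hd₁ : IsDiscreteMeasure (P₁ ω₀)) (hd₂ : IsDiscreteMeasure (P₂ ω₀)) {c : ℝ≥0} (hc : c ≠ 0)
    (h : ∀ᵐ ω ∂Pr, P₂ ω + c • P₁ ω₀ = c • P₁ ω + P₂ ω₀) :
    ∀ᵐ ω ∂Pr, P₁ ω = P₂ ω := by
  have h₂₁ : P₂ ω₀ ≤ c • P₁ ω₀ := hd₂.le_of_ae_add_eq hfa₂ h
  have h₁₂ : P₁ ω₀ ≤ c⁻¹ • P₂ ω₀ := by
    refine hd₁.le_of_ae_add_eq hfa₁ (Q := fun ω => c⁻¹ • P₂ ω) (h.mono fun ω hω => ?_)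
    have := congrArg (c⁻¹ • ·) hω
    simp only [smul_add, smul_smul, inv_mul_cancel₀ hc, one_smul] at this
    exact this.symm
  have hc₁ : c = 1 := by
    have h₂₁' := h₂₁ Set.univ
    have h₁₂' := h₁₂ Set.univ
    simp only [Measure.smul_apply, measure_univ, ENNReal.smul_def, smul_eq_mul, mul_one]
      at h₂₁' h₁₂'
    rw [ENNReal.one_le_coe_iff] at h₂₁' h₁₂'
    exact le_antisymm ((one_le_inv₀ (pos_iff_ne_zero.2 hc)).1 h₁₂') h₂₁'
  subst hc₁
  rw [inv_one, one_smul] at h₁₂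
  rw [one_smul] at h₂₁
  filter_upwards [h] with ω hω
  rw [one_smul, one_smul, le_antisymm h₁₂ h₂₁] at hω
  ext s
  refine ((ENNReal.add_left_inj (measure_ne_top (P₂ ω₀) s)).1 ?_).symm
  simpa using congrArg (· s) hω

section CauchySchwarz

variable {Ω : Type*} [MeasurableSpace Ω] {μ : Measure Ω}
  {E : Type*} [NormedAddCommGroup E] [InnerProductSpace ℝ E] {f g : Ω → E}

theorem MeasureTheory.MemLp.inner_toLp_toLp (hf : MemLp f 2 μ) (hg : MemLp g 2 μ) :
    ⟪hf.toLp f, hg.toLp g⟫ = ∫ ω, ⟪f ω, g ω⟫ ∂μ := by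
  rw [L2.inner_def]
  refine integral_congr_ae ?_
  filter_upwards [hf.coeFn_toLp, hg.coeFn_toLp] with ω hfω hgω
  rw [hfω, hgω]

theorem ae_smul_eq_smul_of_integral_inner_eq (hf : MemLp f 2 μ) (hg : MemLp g 2 μ)
    (h : ∫ ω, ⟪f ω, g ω⟫ ∂μ = √(∫ ω, ⟪f ω, f ω⟫ ∂μ) * √(∫ ω, ⟪g ω, g ω⟫ ∂μ)) :
    ∀ᵐ ω ∂μ, √(∫ ω, ⟪g ω, g ω⟫ ∂μ) • f ω = √(∫ ω, ⟪f ω, f ω⟫ ∂μ) • g ω := by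
  have hnorm : ∀ {u : Ω → E} (hu : MemLp u 2 μ), ‖hu.toLp u‖ = √(∫ ω, ⟪u ω, u ω⟫ ∂μ) :=
    fun hu => by rw [← hu.inner_toLp_toLp hu, real_inner_self_eq_norm_mul_norm,
      Real.sqrt_mul_self (norm_nonneg _)]
  have hLp : ‖hg.toLp g‖ • hf.toLp f = ‖hf.toLp f‖ • hg.toLp g := by
    rw [← inner_eq_norm_mul_iff_real, hf.inner_toLp_toLp, hnorm, hnorm, h]
  filter_upwards [hf.coeFn_toLp, hg.coeFn_toLp, Lp.coeFn_smul ‖hg.toLp g‖ (hf.toLp f),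
    Lp.coeFn_smul ‖hf.toLp f‖ (hg.toLp g)] with ω hfω hgω hfgω hgfω
  rw [← hnorm hf, ← hnorm hg, ← hfω, ← hgω, ← Pi.smul_apply, ← hfgω, hLp, hgfω, Pi.smul_apply]

end CauchySchwarz

section RandomMeasure

variable {X : Type*} [MeasurableSpace X] {k : X → X → ℝ}
  {H : Type*} [NormedAddCommGroup H] [InnerProductSpace ℝ H] [CompleteSpace H]
  {Ω : Type*} [MeasurableSpace Ω] {Pr : Measure Ω}

theorem FeatureMap.stronglyMeasurable_meanEmb (F : FeatureMap k H) {P : Ω → Measure X}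
    (hP : Measurable P) [∀ ω, IsProbabilityMeasure (P ω)] :
    StronglyMeasurable fun ω => meanEmb F (P ω) :=
  have : IsMarkovKernel ⟨P, hP⟩ := ⟨inferInstance⟩
  StronglyMeasurable.integral_kernel_prod_right (κ := ⟨P, hP⟩)
    (F.stronglyMeasurable.comp_measurable measurable_snd)

theorem FeatureMap.memLp_top_meanEmb (hk : IsKernel k) (F : FeatureMap k H) {P : Ω → Measure X}
    (hP : Measurable P) [∀ ω, IsProbabilityMeasure (P ω)] :
    MemLp (fun ω => meanEmb F (P ω)) ∞ Pr := by
  obtain ⟨B, hB⟩ := F.exists_norm_le hk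
  refine memLp_top_of_bound (F.stronglyMeasurable_meanEmb hP).aestronglyMeasurable B
    (.of_forall fun ω => ?_)
  calc ‖meanEmb F (P ω)‖ ≤ B * (P ω).real Set.univ :=
        norm_integral_le_of_norm_le_const (.of_forall hB)
    _ = B := by simp

theorem exists_ae_meanEmb_eq_smul_add_of_kerCorr_eq_one [IsProbabilityMeasure Pr]
    (hk : IsKernel k) (F : FeatureMap k H) {P₁ P₂ : Ω → Measure X}
    [∀ ω, IsProbabilityMeasure (P₁ ω)] [∀ ω, IsProbabilityMeasure (P₂ ω)]
    (hP₁ : Measurable P₁) (hP₂ : Measurable P₂)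
    (hV₁ : 0 < kerVar F Pr P₁) (hV₂ : 0 < kerVar F Pr P₂) (h : kerCorr F Pr P₁ P₂ = 1) :
    ∃ c : ℝ≥0, c ≠ 0 ∧ ∃ m : H,
      ∀ᵐ ω ∂Pr, meanEmb F (P₂ ω) = (c : ℝ) • meanEmb F (P₁ ω) + m := by
  set m₁ := ∫ ω, meanEmb F (P₁ ω) ∂Pr
  set m₂ := ∫ ω, meanEmb F (P₂ ω) ∂Pr
  have hf : MemLp (fun ω => meanEmb F (P₁ ω) - m₁) 2 Pr :=
    ((F.memLp_top_meanEmb hk hP₁).sub (memLp_const m₁)).mono_exponent le_top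
  have hg : MemLp (fun ω => meanEmb F (P₂ ω) - m₂) 2 Pr :=
    ((F.memLp_top_meanEmb hk hP₂).sub (memLp_const m₂)).mono_exponent le_top
  have hσ₁ : 0 < √(kerVar F Pr P₁) := Real.sqrt_pos.2 hV₁
  have hσ₂ : 0 < √(kerVar F Pr P₂) := Real.sqrt_pos.2 hV₂
  have hcs := ae_smul_eq_smul_of_integral_inner_eq hf hg
    ((div_eq_one_iff_eq (mul_pos hσ₁ hσ₂).ne').1 h)
  obtain ⟨c, hc⟩ : ∃ c : ℝ≥0, (c : ℝ) = √(kerVar F Pr P₂) / √(kerVar F Pr P₁) :=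
    ⟨_, Real.coe_toNNReal _ (div_pos hσ₂ hσ₁).le⟩
  refine ⟨c, NNReal.coe_ne_zero.1 (hc ▸ (div_pos hσ₂ hσ₁).ne'), m₂ - (c : ℝ) • m₁, ?_⟩
  filter_upwards [hcs] with ω hω
  have hω' : meanEmb F (P₂ ω) - m₂ = (c : ℝ) • (meanEmb F (P₁ ω) - m₁) := by
    rw [hc, div_eq_inv_mul, mul_smul]
    exact (eq_inv_smul_iff₀ hσ₁.ne').2 hω.symm
  linear_combination (norm := module) hω'

theorem FeatureMap.ae_add_smul_eq_of_ae_meanEmb_eq (hk : IsKernel k)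
    (hinj : Function.Injective (signedMeanEmb k)) (F : FeatureMap k H) {P₁ P₂ : Ω → Measure X}
    [∀ ω, IsFiniteMeasure (P₁ ω)] [∀ ω, IsFiniteMeasure (P₂ ω)] {c : ℝ≥0} {m : H}
    (h : ∀ᵐ ω ∂Pr, meanEmb F (P₂ ω) = (c : ℝ) • meanEmb F (P₁ ω) + m) {ω₀ : Ω}
    (hω₀ : meanEmb F (P₂ ω₀) = (c : ℝ) • meanEmb F (P₁ ω₀) + m) :
    ∀ᵐ ω ∂Pr, P₂ ω + c • P₁ ω₀ = c • P₁ ω + P₂ ω₀ := by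
  filter_upwards [h] with ω hω
  rw [← F.meanEmb_inj hk hinj, F.meanEmb_add hk, F.meanEmb_add hk, F.meanEmb_smul,
    F.meanEmb_smul, hω, hω₀]
  abel

theorem kerCov_congr_ae (F : FeatureMap k H) {P₁ P₂ Q₁ Q₂ : Ω → Measure X}
    (h₁ : P₁ =ᵐ[Pr] Q₁) (h₂ : P₂ =ᵐ[Pr] Q₂) : kerCov F Pr P₁ P₂ = kerCov F Pr Q₁ Q₂ := by
  have hmean : ∀ {P Q : Ω → Measure X}, P =ᵐ[Pr] Q →
      ∫ ω, meanEmb F (P ω) ∂Pr = ∫ ω, meanEmb F (Q ω) ∂Pr :=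
    fun h => integral_congr_ae (h.fun_comp (meanEmb F))
  rw [kerCov, kerCov, hmean h₁, hmean h₂]
  refine integral_congr_ae ?_
  filter_upwards [h₁, h₂] with ω hω₁ hω₂
  rw [hω₁, hω₂]

theorem kerCorr_eq_one_of_ae_eq (F : FeatureMap k H) {P₁ P₂ : Ω → Measure X}
    (h : P₁ =ᵐ[Pr] P₂) (hV : 0 < kerVar F Pr P₁) : kerCorr F Pr P₁ P₂ = 1 := by
  have hcov : kerCov F Pr P₁ P₂ = kerVar F Pr P₁ := kerCov_congr_ae F .rfl h.symm
  have hvar : kerVar F Pr P₂ = kerVar F Pr P₁ := kerCov_congr_ae F h.symm h.symm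
  rw [kerCorr, hcov, hvar, Real.mul_self_sqrt hV.le, div_self hV.ne']

end RandomMeasure

theorem stmt_6_general
    {X : Type*} [TopologicalSpace X] [PolishSpace X]
    [MeasurableSpace X] [BorelSpace X]
    {k : X → X → ℝ} (hk : IsKernel k) (hk0 : IsC0Universal k)
    {H : Type*} [NormedAddCommGroup H] [InnerProductSpace ℝ H] [CompleteSpace H]
    (F : FeatureMap k H)
    {Ω : Type*} [MeasurableSpace Ω] (Pr : Measure Ω) [IsProbabilityMeasure Pr]
    (P₁ P₂ : Ω → Measure X)
    (hP₁ : ∀ ω, IsProbabilityMeasure (P₁ ω)) (hP₂ : ∀ ω, IsProbabilityMeasure (P₂ ω))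
    (hP₁m : Measurable P₁) (hP₂m : Measurable P₂)
    -- almost surely discrete random probabilities
    (hd₁ : ∀ᵐ ω ∂Pr, IsDiscreteMeasure (P₁ ω))
    (hd₂ : ∀ᵐ ω ∂Pr, IsDiscreteMeasure (P₂ ω))
    -- for every fixed atom `z` and every `ε > 0`, `P(P̃({z}) < ε) > 0`
    (hfa₁ : ∀ z : X, 0 < Pr {ω | 0 < P₁ ω {z}} →
      ∀ ε : ℝ≥0∞, 0 < ε → 0 < Pr {ω | P₁ ω {z} < ε})
    (hfa₂ : ∀ z : X, 0 < Pr {ω | 0 < P₂ ω {z}} →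
      ∀ ε : ℝ≥0∞, 0 < ε → 0 < Pr {ω | P₂ ω {z} < ε})
    (hV₁ : 0 < kerVar F Pr P₁) (hV₂ : 0 < kerVar F Pr P₂) :
    kerCorr F Pr P₁ P₂ = 1 ↔ ∀ᵐ ω ∂Pr, P₁ ω = P₂ ω := by
  have := hP₁
  have := hP₂
  refine ⟨fun hcorr => ?_, fun h => kerCorr_eq_one_of_ae_eq F h hV₁⟩
  obtain ⟨c, hc, m, hm⟩ :=
    exists_ae_meanEmb_eq_smul_add_of_kerCorr_eq_one hk F hP₁m hP₂m hV₁ hV₂ hcorr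
  obtain ⟨ω₀, hmω₀, hd₁ω₀, hd₂ω₀⟩ := (hm.and (hd₁.and hd₂)).exists
  exact ae_eq_of_ae_add_smul_eq hfa₁ hfa₂ hd₁ω₀ hd₂ω₀ hc
    (F.ae_add_smul_eq_of_ae_meanEmb_eq hk hk0.2 hm hmω₀)

theorem stmt_6
    {X : Type*} [TopologicalSpace X] [PolishSpace X] [LocallyCompactSpace X]
    [MeasurableSpace X] [BorelSpace X]
    {k : X → X → ℝ} (hk : IsKernel k) (hk0 : IsC0Universal k)
    {H : Type*} [NormedAddCommGroup H] [InnerProductSpace ℝ H] [CompleteSpace H]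
    (F : FeatureMap k H)
    {Ω : Type*} [MeasurableSpace Ω] (Pr : Measure Ω) [IsProbabilityMeasure Pr]
    (P₁ P₂ : Ω → Measure X)
    (hP₁ : ∀ ω, IsProbabilityMeasure (P₁ ω)) (hP₂ : ∀ ω, IsProbabilityMeasure (P₂ ω))
    (hP₁m : Measurable P₁) (hP₂m : Measurable P₂)
    -- almost surely discrete random probabilities
    (hd₁ : ∀ᵐ ω ∂Pr, IsDiscreteMeasure (P₁ ω))
    (hd₂ : ∀ᵐ ω ∂Pr, IsDiscreteMeasure (P₂ ω))
    -- for every fixed atom `z` and every `ε > 0`, `P(P̃({z}) < ε) > 0`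
    (hfa₁ : ∀ z : X, 0 < Pr {ω | 0 < P₁ ω {z}} →
      ∀ ε : ℝ≥0∞, 0 < ε → 0 < Pr {ω | P₁ ω {z} < ε})
    (hfa₂ : ∀ z : X, 0 < Pr {ω | 0 < P₂ ω {z}} →
      ∀ ε : ℝ≥0∞, 0 < ε → 0 < Pr {ω | P₂ ω {z} < ε})
    (hV₁ : 0 < kerVar F Pr P₁) (hV₂ : 0 < kerVar F Pr P₂) :
    kerCorr F Pr P₁ P₂ = 1 ↔ ∀ᵐ ω ∂Pr, P₁ ω = P₂ ω :=
  stmt_6_general hk hk0 F Pr P₁ P₂ hP₁ hP₂ hP₁m hP₂m hd₁ hd₂ hfa₁ hfa₂ hV₁ hV₂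

end
end

section
/- Let (X_{1,1}^{(t)}, X_{2,1}^{(t)}, X_{1,2}^{(t)}, X_{2,2}^{(t)}), for t = 1,…,M, be independent copies of observations from the partially exchangeable model X_{i,j} | (P̃₁,P̃₂) iid ∼ P̃ᵢ, (P̃₁,P̃₂) ∼ Q. Then the statistic (M−1)^{-1} Σ_{t=1}^M k(X_{1,1}^{(t)}, X_{2,1}^{(t)}) − ((M−1)M)^{-1} Σ_{t=1}^M Σ_{s=1}^M k(X_{1,1}^{(t)}, X_{2,1}^{(s)}) is an unbiased estimator of Cov_k(P̃₁,P̃₂), and for i = 1,2 the statistic (M−1)^{-1} Σ_{t=1}^M k(X_{i,1}^{(t)}, X_{i,2}^{(t)}) − ((M−1)M)^{-1} Σ_{t=1}^M Σ_{s=1}^M k(X_{i,1}^{(t)}, X_{i,2}^{(s)}) is an unbiased estimator of Var_k(P̃ᵢ). -/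
open MeasureTheory ProbabilityTheory Filter
open scoped RealInnerProductSpace ENNReal NNReal

noncomputable section

/-! Each statistic is a weighted difference of within-copy and between-copy values of `k`.
Within a copy the pair of observations is drawn from the `Q`-mixture of `P̃ᵢ ⊗ P̃ⱼ`, and
`∫ k d(μ ⊗ ν) = ⟪μ_k(μ), μ_k(ν)⟫`, so each diagonal term has mean `E⟪μ_k(P̃ᵢ), μ_k(P̃ⱼ)⟫`.
Across independent copies the pair is drawn from the product of the marginal mixtures `E P̃ᵢ`,
whose mean embeddings are `E μ_k(P̃ᵢ)`, so each off-diagonal term has mean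
`⟪E μ_k(P̃ᵢ), E μ_k(P̃ⱼ)⟫`. With the weights `(M - 1)⁻¹` and `((M - 1) M)⁻¹` the statistic has
mean the difference of the two, which is `Cov_k` expanded by bilinearity. -/

section Hilbert

variable {Ω : Type*} [MeasurableSpace Ω] {μ : Measure Ω}
  {H : Type*} [NormedAddCommGroup H] [InnerProductSpace ℝ H]

lemma integrable_inner_of_norm_le [IsFiniteMeasure μ] {f g : Ω → H}
    (hf : StronglyMeasurable f) (hg : StronglyMeasurable g) {C : ℝ}
    (hfC : ∀ ω, ‖f ω‖ ≤ C) (hgC : ∀ ω, ‖g ω‖ ≤ C) :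
    Integrable (fun ω => ⟪f ω, g ω⟫) μ :=
  .of_bound (hf.inner hg).aestronglyMeasurable (C * C) <| ae_of_all _ fun ω =>
    (norm_inner_le_norm _ _).trans
      (mul_le_mul (hfC ω) (hgC ω) (norm_nonneg _) ((norm_nonneg _).trans (hfC ω)))

lemma integral_inner_sub_integral [CompleteSpace H] [IsProbabilityMeasure μ] {f g : Ω → H}
    (hf : Integrable f μ) (hg : Integrable g μ) (hfg : Integrable (fun ω => ⟪f ω, g ω⟫) μ) :
    ∫ ω, ⟪f ω - ∫ ω', f ω' ∂μ, g ω - ∫ ω', g ω' ∂μ⟫ ∂μ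
      = ∫ ω, ⟪f ω, g ω⟫ ∂μ - ⟪∫ ω, f ω ∂μ, ∫ ω, g ω ∂μ⟫ := by
  set a := ∫ ω, f ω ∂μ
  set b := ∫ ω, g ω ∂μ
  have expand : ∀ ω, ⟪f ω - a, g ω - b⟫ = ⟪f ω, g ω⟫ - ⟪a, g ω⟫ - ⟪b, f ω⟫ + ⟪a, b⟫ := by
    intro ω
    rw [inner_sub_left, inner_sub_right, inner_sub_right, real_inner_comm b]
    ring
  have hfg_ag : Integrable (fun ω => ⟪f ω, g ω⟫ - ⟪a, g ω⟫) μ := hfg.sub (hg.const_inner a)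
  have hfg_ag_bf : Integrable (fun ω => ⟪f ω, g ω⟫ - ⟪a, g ω⟫ - ⟪b, f ω⟫) μ :=
    hfg_ag.sub (hf.const_inner b)
  simp_rw [expand]
  rw [integral_add hfg_ag_bf (integrable_const _), integral_sub hfg_ag (hf.const_inner b),
    integral_sub hfg (hg.const_inner a), integral_inner hg, integral_inner hf, integral_const,
    probReal_univ, one_smul, real_inner_comm a b]
  ring

end Hilbert

lemma MeasureTheory.Measure.integral_comp {α β E : Type*} [MeasurableSpace α] [MeasurableSpace β]
    [NormedAddCommGroup E] [NormedSpace ℝ E] (μ : Measure α) (κ : Kernel α β) {f : β → E}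
    (hf : Integrable f (κ ∘ₘ μ)) :
    ∫ y, f y ∂(κ ∘ₘ μ) = ∫ x, ∫ y, f y ∂κ x ∂μ := by
  rw [Measure.comp_eq_comp_const_apply] at hf ⊢
  rw [Kernel.integral_comp hf, Kernel.const_apply]

section MixtureLaw

variable {Ω α β : Type*} [MeasurableSpace Ω] [MeasurableSpace α] [MeasurableSpace β]
  {μ : Measure Ω} {Y : Ω → α} {Z : Ω → β} {κ : Kernel Ω α} {η : Kernel Ω β}

lemma map_prodMk_eq_comp_prod [IsFiniteMeasure μ] [IsSFiniteKernel κ] [IsSFiniteKernel η]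
    (hY : Measurable Y) (hZ : Measurable Z)
    (h : ∀ A B, MeasurableSet A → MeasurableSet B →
      μ (Y ⁻¹' A ∩ Z ⁻¹' B) = ∫⁻ ω, κ ω A * η ω B ∂μ) :
    μ.map (fun ω => (Y ω, Z ω)) = (κ ×ₖ η) ∘ₘ μ := by
  refine Measure.ext_prod fun {A B} hA hB => ?_
  rw [Measure.map_apply (hY.prodMk hZ) (hA.prod hB), Set.mk_preimage_prod, h A B hA hB,
    Measure.bind_apply (hA.prod hB) (Kernel.aemeasurable _)]
  simp_rw [Kernel.prod_apply, Measure.prod_prod]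

lemma map_fst_eq_comp_of_map_prodMk_eq [IsSFiniteKernel κ] [IsMarkovKernel η]
    (hZ : Measurable Z) (h : μ.map (fun ω => (Y ω, Z ω)) = (κ ×ₖ η) ∘ₘ μ) :
    μ.map Y = κ ∘ₘ μ := by
  rw [← Measure.fst_map_prodMk hZ, h, Measure.fst, Measure.map_comp _ _ measurable_fst,
    ← Kernel.fst_eq, Kernel.fst_prod]

lemma map_snd_eq_comp_of_map_prodMk_eq [IsMarkovKernel κ] [IsSFiniteKernel η]
    (hY : Measurable Y) (h : μ.map (fun ω => (Y ω, Z ω)) = (κ ×ₖ η) ∘ₘ μ) :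
    μ.map Z = η ∘ₘ μ := by
  rw [← Measure.snd_map_prodMk hY, h, Measure.snd, Measure.map_comp _ _ measurable_snd,
    ← Kernel.snd_eq, Kernel.snd_prod]

end MixtureLaw

lemma integral_diag_sub_total_eq {Ω : Type*} [MeasurableSpace Ω] {μ : Measure Ω} {M : ℕ}
    (hM : 2 ≤ M) {f : Fin M → Fin M → Ω → ℝ} (hf : ∀ t s, Integrable (f t s) μ) {a b : ℝ}
    (hdiag : ∀ t, ∫ ω, f t t ω ∂μ = a) (hoff : ∀ t s, t ≠ s → ∫ ω, f t s ω ∂μ = b) :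
    ∫ ω, (((M : ℝ) - 1)⁻¹ * ∑ t, f t t ω - (((M : ℝ) - 1) * M)⁻¹ * ∑ t, ∑ s, f t s ω) ∂μ
      = a - b := by
  have hrow : ∀ t, ∑ s, ∫ ω, f t s ω ∂μ = a + (M - 1) * b := by
    intro t
    rw [← Finset.add_sum_erase _ _ (Finset.mem_univ t), hdiag t,
      Finset.sum_congr rfl fun s hs => hoff t s (Finset.ne_of_mem_erase hs).symm,
      Finset.sum_const, Finset.card_erase_of_mem (Finset.mem_univ t), Finset.card_univ,
      Fintype.card_fin, nsmul_eq_mul, Nat.cast_pred (by omega)]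
  rw [integral_sub ((integrable_finsetSum _ fun t _ => hf t t).const_mul _)
      ((integrable_finsetSum _ fun t _ => integrable_finsetSum _ fun s _ => hf t s).const_mul _),
    integral_const_mul, integral_const_mul, integral_finsetSum _ fun t _ => hf t t,
    integral_finsetSum _ fun t _ => integrable_finsetSum _ fun s _ => hf t s]
  simp_rw [integral_finsetSum _ fun s _ => hf _ s, hrow, hdiag]
  have hM' : (2 : ℝ) ≤ M := by exact_mod_cast hM
  have hM₀ : (M : ℝ) ≠ 0 := by linarith
  have hM₁ : (M : ℝ) - 1 ≠ 0 := by linarith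
  simp only [Finset.sum_const, Finset.card_univ, Fintype.card_fin, nsmul_eq_mul]
  field_simp
  ring

namespace FeatureMap

variable {X : Type*} [MeasurableSpace X] {k : X → X → ℝ}
  {H : Type*} [NormedAddCommGroup H] [InnerProductSpace ℝ H]

lemma stronglyMeasurable_uncurry (F : FeatureMap k H) :
    StronglyMeasurable fun p : X × X => k p.1 p.2 := by
  simp_rw [← F.repro]
  exact (F.stronglyMeasurable.comp_measurable measurable_fst).inner
    (F.stronglyMeasurable.comp_measurable measurable_snd)

variable (F : FeatureMap k H)

lemma exists_norm_apply_le (hk : ∃ C, ∀ x y, |k x y| ≤ C) : ∃ C, ∀ x, ‖F.toFun x‖ ≤ C := by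
  obtain ⟨C, hC⟩ := hk
  refine ⟨√C, fun x => ?_⟩
  rw [← Real.sqrt_sq (norm_nonneg _), ← real_inner_self_eq_norm_sq, F.repro]
  exact Real.sqrt_le_sqrt ((le_abs_self _).trans (hC x x))

variable {C : ℝ}

lemma integrable_toFun (hC : ∀ x, ‖F.toFun x‖ ≤ C) (μ : Measure X) [IsFiniteMeasure μ] :
    Integrable F.toFun μ :=
  .of_bound F.stronglyMeasurable.aestronglyMeasurable C (ae_of_all _ hC)

lemma integrable_uncurry (hC : ∀ x, ‖F.toFun x‖ ≤ C) (μ : Measure (X × X)) [IsFiniteMeasure μ] :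
    Integrable (fun p : X × X => k p.1 p.2) μ := by
  simp_rw [← F.repro]
  exact integrable_inner_of_norm_le (F.stronglyMeasurable.comp_measurable measurable_fst)
    (F.stronglyMeasurable.comp_measurable measurable_snd) (fun p => hC p.1) (fun p => hC p.2)

variable [CompleteSpace H]

lemma norm_meanEmb_le (hC : ∀ x, ‖F.toFun x‖ ≤ C) (μ : Measure X) [IsProbabilityMeasure μ] :
    ‖meanEmb F μ‖ ≤ C := by
  simpa [meanEmb] using norm_integral_le_of_norm_le_const (μ := μ) (ae_of_all _ hC)

lemma integral_prod_eq_inner_meanEmb (hC : ∀ x, ‖F.toFun x‖ ≤ C) (μ ν : Measure X)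
    [IsProbabilityMeasure μ] [IsProbabilityMeasure ν] :
    ∫ p : X × X, k p.1 p.2 ∂(μ.prod ν) = ⟪meanEmb F μ, meanEmb F ν⟫ := by
  rw [integral_prod _ (F.integrable_uncurry hC _)]
  simp_rw [← F.repro, integral_inner (F.integrable_toFun hC ν),
    real_inner_comm (∫ y, F.toFun y ∂ν)]
  exact (integral_inner (F.integrable_toFun hC μ) _).trans (real_inner_comm _ _)

variable {Ω : Type*} [MeasurableSpace Ω]

lemma stronglyMeasurable_meanEmb_s8 (κ : Kernel Ω X) [IsSFiniteKernel κ] :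
    StronglyMeasurable fun ω => meanEmb F (κ ω) :=
  (F.stronglyMeasurable.comp_measurable measurable_snd).integral_kernel_prod_right'

lemma integrable_meanEmb (hC : ∀ x, ‖F.toFun x‖ ≤ C) (κ : Kernel Ω X) [IsMarkovKernel κ]
    (μ : Measure Ω) [IsFiniteMeasure μ] : Integrable (fun ω => meanEmb F (κ ω)) μ :=
  .of_bound (F.stronglyMeasurable_meanEmb_s8 κ).aestronglyMeasurable C
    (ae_of_all _ fun ω => F.norm_meanEmb_le hC (κ ω))

lemma meanEmb_comp (hC : ∀ x, ‖F.toFun x‖ ≤ C) (κ : Kernel Ω X) [IsMarkovKernel κ]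
    (μ : Measure Ω) [IsProbabilityMeasure μ] :
    meanEmb F (κ ∘ₘ μ) = ∫ ω, meanEmb F (κ ω) ∂μ :=
  Measure.integral_comp μ κ (F.integrable_toFun hC _)

lemma kerCov_eq_integral_inner_sub_inner_integral (hC : ∀ x, ‖F.toFun x‖ ≤ C)
    (μ : Measure Ω) [IsProbabilityMeasure μ] (κ₁ κ₂ : Kernel Ω X)
    [IsMarkovKernel κ₁] [IsMarkovKernel κ₂] :
    kerCov F μ κ₁ κ₂ = ∫ ω, ⟪meanEmb F (κ₁ ω), meanEmb F (κ₂ ω)⟫ ∂μ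
      - ⟪∫ ω, meanEmb F (κ₁ ω) ∂μ, ∫ ω, meanEmb F (κ₂ ω) ∂μ⟫ :=
  integral_inner_sub_integral (F.integrable_meanEmb hC κ₁ μ) (F.integrable_meanEmb hC κ₂ μ)
    (integrable_inner_of_norm_le (F.stronglyMeasurable_meanEmb_s8 κ₁)
      (F.stronglyMeasurable_meanEmb_s8 κ₂) (fun ω => F.norm_meanEmb_le hC (κ₁ ω))
      (fun ω => F.norm_meanEmb_le hC (κ₂ ω)))

lemma integral_apply_of_map_prodMk_eq_comp_prod (hC : ∀ x, ‖F.toFun x‖ ≤ C)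
    {μ : Measure Ω} [IsProbabilityMeasure μ] {Y Z : Ω → X} (hY : Measurable Y)
    (hZ : Measurable Z) {κ₁ κ₂ : Kernel Ω X} [IsMarkovKernel κ₁] [IsMarkovKernel κ₂]
    (hlaw : μ.map (fun ω => (Y ω, Z ω)) = (κ₁ ×ₖ κ₂) ∘ₘ μ) :
    ∫ ω, k (Y ω) (Z ω) ∂μ = ∫ ω, ⟪meanEmb F (κ₁ ω), meanEmb F (κ₂ ω)⟫ ∂μ := by
  calc ∫ ω, k (Y ω) (Z ω) ∂μ = ∫ p : X × X, k p.1 p.2 ∂((κ₁ ×ₖ κ₂) ∘ₘ μ) := by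
        rw [← hlaw, integral_map (hY.prodMk hZ).aemeasurable
          F.stronglyMeasurable_uncurry.aestronglyMeasurable]
    _ = ∫ ω, ∫ p : X × X, k p.1 p.2 ∂((κ₁ ω).prod (κ₂ ω)) ∂μ := by
        rw [Measure.integral_comp μ _ (F.integrable_uncurry hC _)]
        simp_rw [Kernel.prod_apply]
    _ = ∫ ω, ⟪meanEmb F (κ₁ ω), meanEmb F (κ₂ ω)⟫ ∂μ := by
        simp_rw [F.integral_prod_eq_inner_meanEmb hC]

lemma integral_apply_of_indepFun (hC : ∀ x, ‖F.toFun x‖ ≤ C)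
    {μ : Measure Ω} [IsProbabilityMeasure μ] {Y Z : Ω → X} (hY : Measurable Y)
    (hZ : Measurable Z) (hYZ : IndepFun Y Z μ) :
    ∫ ω, k (Y ω) (Z ω) ∂μ = ⟪meanEmb F (μ.map Y), meanEmb F (μ.map Z)⟫ := by
  have := Measure.isProbabilityMeasure_map (μ := μ) hY.aemeasurable
  have := Measure.isProbabilityMeasure_map (μ := μ) hZ.aemeasurable
  rw [← F.integral_prod_eq_inner_meanEmb hC,
    ← (indepFun_iff_map_prod_eq_prod_map_map hY.aemeasurable hZ.aemeasurable).mp hYZ,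
    integral_map (hY.prodMk hZ).aemeasurable F.stronglyMeasurable_uncurry.aestronglyMeasurable]

lemma integral_stat_eq_kerCov (hC : ∀ x, ‖F.toFun x‖ ≤ C)
    {μ : Measure Ω} [IsProbabilityMeasure μ] {κ₁ κ₂ : Kernel Ω X}
    [IsMarkovKernel κ₁] [IsMarkovKernel κ₂] {M : ℕ} (hM : 2 ≤ M) {Y Z : Fin M → Ω → X}
    (hY : ∀ t, Measurable (Y t)) (hZ : ∀ t, Measurable (Z t))
    (hlaw : ∀ t, μ.map (fun ω => (Y t ω, Z t ω)) = (κ₁ ×ₖ κ₂) ∘ₘ μ)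
    (hindep : ∀ t s, t ≠ s → IndepFun (Y t) (Z s) μ) :
    ∫ ω, (((M : ℝ) - 1)⁻¹ * ∑ t, k (Y t ω) (Z t ω)
        - (((M : ℝ) - 1) * M)⁻¹ * ∑ t, ∑ s, k (Y t ω) (Z s ω)) ∂μ
      = kerCov F μ κ₁ κ₂ := by
  rw [F.kerCov_eq_integral_inner_sub_inner_integral hC]
  refine integral_diag_sub_total_eq (f := fun t s ω => k (Y t ω) (Z s ω)) hM (fun t s => ?_)
    (fun t => F.integral_apply_of_map_prodMk_eq_comp_prod hC (hY t) (hZ t) (hlaw t))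
    (fun t s hts => ?_)
  · exact (F.integrable_uncurry hC (μ.map fun ω => (Y t ω, Z s ω))).comp_measurable
      ((hY t).prodMk (hZ s))
  · rw [F.integral_apply_of_indepFun hC (hY t) (hZ s) (hindep t s hts),
      map_fst_eq_comp_of_map_prodMk_eq (hZ t) (hlaw t),
      map_snd_eq_comp_of_map_prodMk_eq (hY s) (hlaw s), F.meanEmb_comp hC, F.meanEmb_comp hC]

end FeatureMap

theorem stmt_8_general
    {X : Type*} [MeasurableSpace X]
    {k : X → X → ℝ} (hk : IsKernel k)
    {H : Type*} [NormedAddCommGroup H] [InnerProductSpace ℝ H] [CompleteSpace H]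
    (F : FeatureMap k H)
    {Ω : Type*} [MeasurableSpace Ω] (Pr : Measure Ω) [IsProbabilityMeasure Pr]
    (P₁ P₂ : Ω → Measure X)
    (hP₁ : ∀ ω, IsProbabilityMeasure (P₁ ω)) (hP₂ : ∀ ω, IsProbabilityMeasure (P₂ ω))
    (hP₁m : Measurable P₁) (hP₂m : Measurable P₂)
    -- `M` independent copies of the four observables of the partially exchangeable model
    (M : ℕ) (hM : 2 ≤ M)
    (X11 X12 X21 X22 : Fin M → Ω → X)
    (hX11 : ∀ t, Measurable (X11 t)) (hX12 : ∀ t, Measurable (X12 t))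
    (hX21 : ∀ t, Measurable (X21 t)) (hX22 : ∀ t, Measurable (X22 t))
    -- each copy is distributed as the partially exchangeable model:
    -- the law of `(X11 t, X12 t, X21 t, X22 t)` is the `Q`-mixture of
    -- `P̃₁ ⊗ P̃₁ ⊗ P̃₂ ⊗ P̃₂`
    (hlaw : ∀ t : Fin M, ∀ (A B C D : Set X), MeasurableSet A → MeasurableSet B →
      MeasurableSet C → MeasurableSet D →
      Pr (X11 t ⁻¹' A ∩ X12 t ⁻¹' B ∩ X21 t ⁻¹' C ∩ X22 t ⁻¹' D)
        = ∫⁻ ω, P₁ ω A * P₁ ω B * P₂ ω C * P₂ ω D ∂Pr)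
    -- the copies are independent
    (hindep : iIndepFun
      (fun t ω => (X11 t ω, X12 t ω, X21 t ω, X22 t ω)) Pr) :
    (∫ ω, (((M : ℝ) - 1)⁻¹ * ∑ t : Fin M, k (X11 t ω) (X21 t ω)
        - (((M : ℝ) - 1) * M)⁻¹ * ∑ t : Fin M, ∑ s : Fin M, k (X11 t ω) (X21 s ω)) ∂Pr)
      = kerCov F Pr P₁ P₂ ∧
    (∫ ω, (((M : ℝ) - 1)⁻¹ * ∑ t : Fin M, k (X11 t ω) (X12 t ω)
        - (((M : ℝ) - 1) * M)⁻¹ * ∑ t : Fin M, ∑ s : Fin M, k (X11 t ω) (X12 s ω)) ∂Pr)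
      = kerVar F Pr P₁ ∧
    (∫ ω, (((M : ℝ) - 1)⁻¹ * ∑ t : Fin M, k (X21 t ω) (X22 t ω)
        - (((M : ℝ) - 1) * M)⁻¹ * ∑ t : Fin M, ∑ s : Fin M, k (X21 t ω) (X22 s ω)) ∂Pr)
      = kerVar F Pr P₂ := by
  obtain ⟨C, hC⟩ := F.exists_norm_apply_le hk.bounded
  let κ₁ : Kernel Ω X := ⟨P₁, hP₁m⟩
  let κ₂ : Kernel Ω X := ⟨P₂, hP₂m⟩
  have : IsMarkovKernel κ₁ := ⟨hP₁⟩
  have : IsMarkovKernel κ₂ := ⟨hP₂⟩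
  have hlaw₁₂ (t) : Pr.map (fun ω => (X11 t ω, X21 t ω)) = (κ₁ ×ₖ κ₂) ∘ₘ Pr :=
    map_prodMk_eq_comp_prod (hX11 t) (hX21 t) fun A B hA hB => by
      simpa [κ₁, κ₂] using hlaw t A .univ B .univ hA .univ hB .univ
  have hlaw₁₁ (t) : Pr.map (fun ω => (X11 t ω, X12 t ω)) = (κ₁ ×ₖ κ₁) ∘ₘ Pr :=
    map_prodMk_eq_comp_prod (hX11 t) (hX12 t) fun A B hA hB => by
      simpa [κ₁] using hlaw t A B .univ .univ hA hB .univ .univ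
  have hlaw₂₂ (t) : Pr.map (fun ω => (X21 t ω, X22 t ω)) = (κ₂ ×ₖ κ₂) ∘ₘ Pr :=
    map_prodMk_eq_comp_prod (hX21 t) (hX22 t) fun A B hA hB => by
      simpa [κ₂] using hlaw t .univ .univ A B .univ .univ hA hB
  refine ⟨F.integral_stat_eq_kerCov hC hM hX11 hX21 hlaw₁₂ fun t s hts => ?_,
    F.integral_stat_eq_kerCov hC hM hX11 hX12 hlaw₁₁ fun t s hts => ?_,
    F.integral_stat_eq_kerCov hC hM hX21 hX22 hlaw₂₂ fun t s hts => ?_⟩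
  · exact (hindep.indepFun hts).comp measurable_fst measurable_snd.snd.fst
  · exact (hindep.indepFun hts).comp measurable_fst measurable_snd.fst
  · exact (hindep.indepFun hts).comp measurable_snd.snd.fst measurable_snd.snd.snd

theorem stmt_8
    {X : Type*} [TopologicalSpace X] [PolishSpace X] [LocallyCompactSpace X]
    [MeasurableSpace X] [BorelSpace X]
    {k : X → X → ℝ} (hk : IsKernel k)
    {H : Type*} [NormedAddCommGroup H] [InnerProductSpace ℝ H] [CompleteSpace H]
    (F : FeatureMap k H)
    {Ω : Type*} [MeasurableSpace Ω] (Pr : Measure Ω) [IsProbabilityMeasure Pr]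
    (P₁ P₂ : Ω → Measure X)
    (hP₁ : ∀ ω, IsProbabilityMeasure (P₁ ω)) (hP₂ : ∀ ω, IsProbabilityMeasure (P₂ ω))
    (hP₁m : Measurable P₁) (hP₂m : Measurable P₂)
    -- `M` independent copies of the four observables of the partially exchangeable model
    (M : ℕ) (hM : 2 ≤ M)
    (X11 X12 X21 X22 : Fin M → Ω → X)
    (hX11 : ∀ t, Measurable (X11 t)) (hX12 : ∀ t, Measurable (X12 t))
    (hX21 : ∀ t, Measurable (X21 t)) (hX22 : ∀ t, Measurable (X22 t))
    -- each copy is distributed as the partially exchangeable model: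
    -- the law of `(X11 t, X12 t, X21 t, X22 t)` is the `Q`-mixture of
    -- `P̃₁ ⊗ P̃₁ ⊗ P̃₂ ⊗ P̃₂`
    (hlaw : ∀ t : Fin M, ∀ (A B C D : Set X), MeasurableSet A → MeasurableSet B →
      MeasurableSet C → MeasurableSet D →
      Pr (X11 t ⁻¹' A ∩ X12 t ⁻¹' B ∩ X21 t ⁻¹' C ∩ X22 t ⁻¹' D)
        = ∫⁻ ω, P₁ ω A * P₁ ω B * P₂ ω C * P₂ ω D ∂Pr)
    -- the copies are independent
    (hindep : iIndepFun
      (fun t ω => (X11 t ω, X12 t ω, X21 t ω, X22 t ω)) Pr) :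
    (∫ ω, (((M : ℝ) - 1)⁻¹ * ∑ t : Fin M, k (X11 t ω) (X21 t ω)
        - (((M : ℝ) - 1) * M)⁻¹ * ∑ t : Fin M, ∑ s : Fin M, k (X11 t ω) (X21 s ω)) ∂Pr)
      = kerCov F Pr P₁ P₂ ∧
    (∫ ω, (((M : ℝ) - 1)⁻¹ * ∑ t : Fin M, k (X11 t ω) (X12 t ω)
        - (((M : ℝ) - 1) * M)⁻¹ * ∑ t : Fin M, ∑ s : Fin M, k (X11 t ω) (X12 s ω)) ∂Pr)
      = kerVar F Pr P₁ ∧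
    (∫ ω, (((M : ℝ) - 1)⁻¹ * ∑ t : Fin M, k (X21 t ω) (X22 t ω)
        - (((M : ℝ) - 1) * M)⁻¹ * ∑ t : Fin M, ∑ s : Fin M, k (X21 t ω) (X22 s ω)) ∂Pr)
      = kerVar F Pr P₂ :=
  stmt_8_general hk F Pr P₁ P₂ hP₁ hP₂ hP₁m hP₂m M hM X11 X12 X21 X22 hX11 hX12 hX21 hX22 hlaw
    hindep

end
end
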